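/- For every n ≥ 1 there exists a run u (over two threads t1,t2 and a single variable x, consisting of 2n blocks w(x)·r(x), n per thread) such that the ≡_M-equivalence class of u is the singleton {u}, while the ≡_B-equivalence class of u has cardinality (2n)!/(n!·n!); in particular the ≡_B-class is exponentially larger than the ≡_M-class. -/

import Mathlib

namespace TraceTheory

inductive Op : Type
  | rd : Op
  | wr : Op
deriving DecidableEq

structure Lbl (T X : Type) : Type where
  thread : T
  op : Op
  var : X
deriving DecidableEq

/-- A concurrent program run: a finite string over the concurrent alphabet. -/
abbrev Run (T X : Type) := List (Lbl T X)

/-- An event of a run: a symbol together with its occurrence number. -/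
abbrev Event (T X : Type) := Lbl T X × ℕ

variable {T X : Type} [DecidableEq T] [DecidableEq X]

/-- Dependence: same thread, or same variable with at least one write. -/
def Dep (a b : Lbl T X) : Prop :=
  a.thread = b.thread ∨ (a.var = b.var ∧ (a.op = Op.wr ∨ b.op = Op.wr))

/-- The event at position `i` of run `w`. -/
def evAt (w : Run T X) (i : Fin w.length) : Event T X :=
  (w.get i, (w.take (i : ℕ)).count (w.get i))

def HasEv (w : Run T X) (e : Event T X) : Prop := ∃ i : Fin w.length, evAt w i = e

/-- `e` occurs (strictly) before `f` in `w`. -/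
def EvBefore (w : Run T X) (e f : Event T X) : Prop :=
  ∃ i j : Fin w.length, (i : ℕ) < (j : ℕ) ∧ evAt w i = e ∧ evAt w j = f

/-- Program order. -/
def po (w : Run T X) (e f : Event T X) : Prop :=
  e.1.thread = f.1.thread ∧ EvBefore w e f

/-- Reads-from: `f` is a read that observes the write `e` (the last write on
the same variable before `f`). -/
def rf (w : Run T X) (e f : Event T X) : Prop :=
  e.1.op = Op.wr ∧ f.1.op = Op.rd ∧ e.1.var = f.1.var ∧
  ∃ i j : Fin w.length, evAt w i = e ∧ evAt w j = f ∧ (i : ℕ) < (j : ℕ) ∧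
    ∀ k : Fin w.length, (i : ℕ) < (k : ℕ) → (k : ℕ) < (j : ℕ) →
      ¬ ((w.get k).op = Op.wr ∧ (w.get k).var = f.1.var)

/-- Every read is preceded by a write on the same variable. -/
def WellFormed (w : Run T X) : Prop :=
  ∀ j : Fin w.length, (w.get j).op = Op.rd →
    ∃ i : Fin w.length, (i : ℕ) < (j : ℕ) ∧ (w.get i).op = Op.wr ∧
      (w.get i).var = (w.get j).var

/-- Reads-from equivalence. -/
def RfEquiv (w w' : Run T X) : Prop :=
  w.Perm w' ∧ po w = po w' ∧ rf w = rf w'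

/-- A single Mazurkiewicz swap of two adjacent independent symbols. -/
inductive MazSwap : Run T X → Run T X → Prop
  | swap (u v : Run T X) (a b : Lbl T X) (h : ¬ Dep a b) :
      MazSwap (u ++ a :: b :: v) (u ++ b :: a :: v)

/-- Trace (Mazurkiewicz) equivalence: the smallest equivalence closed under swaps. -/
def MazEquiv (w w' : Run T X) : Prop := Relation.EqvGen MazSwap w w'

/-- The trace (happens-before) partial order of a run. -/
def MazOrder (w : Run T X) : Event T X → Event T X → Prop :=
  Relation.TransGen (fun e f => EvBefore w e f ∧ Dep e.1 f.1)

/-- `B` is a block word (one write followed by reads of the same variable) that is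
valid as a contiguous segment whose suffix (remainder of the run) is `s`:
no read after the block reads from the block's write. -/
def ValidBlockSeg (B s : Run T X) : Prop :=
  ∃ a rest, B = a :: rest ∧ a.op = Op.wr ∧
    (∀ b ∈ rest, b.op = Op.rd ∧ b.var = a.var) ∧
    ∀ j : Fin s.length, (s.get j).op = Op.rd → (s.get j).var = a.var →
      ∃ m : Fin s.length, (m : ℕ) < (j : ℕ) ∧ (s.get m).op = Op.wr ∧
        (s.get m).var = a.var

def ThreadsDisjoint (B B' : Run T X) : Prop :=
  ∀ a ∈ B, ∀ b ∈ B', a.thread ≠ b.thread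

/-- A single block-equivalence step (clause (i): block swap, clause (ii): event swap). -/
inductive BlkSwap : Run T X → Run T X → Prop
  | block (p B B' s : Run T X) (hB : ValidBlockSeg B (B' ++ s)) (hB' : ValidBlockSeg B' s)
      (hd : ThreadsDisjoint B B') :
      BlkSwap (p ++ B ++ B' ++ s) (p ++ B' ++ B ++ s)
  | single (p s : Run T X) (a b : Lbl T X) (ht : a.thread ≠ b.thread)
      (h : a.var ≠ b.var ∨ (a.op = Op.rd ∧ b.op = Op.rd)) :
      BlkSwap (p ++ a :: b :: s) (p ++ b :: a :: s)

/-- Block equivalence: smallest reflexive transitive relation closed under the swaps. -/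
def BlkEquiv : Run T X → Run T X → Prop := Relation.ReflTransGen BlkSwap

/-- The set of events of the segment `B` of a run, given the prefix `p` preceding it. -/
def segEvents (p B : Run T X) : Set (Event T X) :=
  { e | ∃ i : Fin B.length, e = (B.get i, ((p ++ B.take (i : ℕ)).count (B.get i))) }

/-- Block-equivalence steps where block swaps are restricted to blocks from `𝔹`. -/
inductive BlkSwapIn (𝔹 : Set (Set (Event T X))) : Run T X → Run T X → Prop
  | block (p B B' s : Run T X) (hB : ValidBlockSeg B (B' ++ s)) (hB' : ValidBlockSeg B' s)
      (hBmem : segEvents p B ∈ 𝔹) (hB'mem : segEvents (p ++ B) B' ∈ 𝔹)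
      (hd : ThreadsDisjoint B B') :
      BlkSwapIn 𝔹 (p ++ B ++ B' ++ s) (p ++ B' ++ B ++ s)
  | single (p s : Run T X) (a b : Lbl T X) (ht : a.thread ≠ b.thread)
      (h : a.var ≠ b.var ∨ (a.op = Op.rd ∧ b.op = Op.rd)) :
      BlkSwapIn 𝔹 (p ++ a :: b :: s) (p ++ b :: a :: s)

/-- Block equivalence restricted to the set of blocks `𝔹`. -/
def BlkEquivIn (𝔹 : Set (Set (Event T X))) : Run T X → Run T X → Prop :=
  Relation.ReflTransGen (BlkSwapIn 𝔹)

/-- A valid block of `w` (as a set of events): a write event together with exactly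
the reads of `w` that read from it. -/
def IsValidBlockOf (w : Run T X) (S : Set (Event T X)) : Prop :=
  ∃ e : Event T X, HasEv w e ∧ e.1.op = Op.wr ∧ S = insert e { f | rf w e f }

def ValidBlocks (w : Run T X) (𝔹 : Set (Set (Event T X))) : Prop :=
  ∀ S ∈ 𝔹, IsValidBlockOf w S

/-- Block `S` occurs as a contiguous subword of `u`. -/
def SerialIn (u : Run T X) (S : Set (Event T X)) : Prop :=
  ∃ p B s, u = p ++ B ++ s ∧ segEvents p B = S

/-- Liberal atomicity of a run `v` with respect to a set of blocks `𝔹`. -/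
def LiberallyAtomic (v : Run T X) (𝔹 : Set (Set (Event T X))) : Prop :=
  ∃ u, BlkEquivIn 𝔹 u v ∧ ∀ S ∈ 𝔹, SerialIn u S

/-- Conflict serializability of a run `v` with respect to a set of blocks `𝔹`. -/
def ConflictSerializable (v : Run T X) (𝔹 : Set (Set (Event T X))) : Prop :=
  ∃ u, MazEquiv u v ∧ ∀ S ∈ 𝔹, SerialIn u S

/-- The block-happens-before order `≺_𝔹`. -/
def Bhb (w : Run T X) (𝔹 : Set (Set (Event T X))) : Event T X → Event T X → Prop :=
  Relation.TransGen (fun e f =>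
    EvBefore w e f ∧ Dep e.1 f.1 ∧
    ¬ (e.1.thread ≠ f.1.thread ∧ ∃ B ∈ 𝔹, ∃ B' ∈ 𝔹, B ≠ B' ∧ e ∈ B ∧ f ∈ B'))

/-- The saturated order `⪻_𝔹` on events (`Sum.inl`) and blocks (`Sum.inr`). -/
inductive Sat (w : Run T X) (𝔹 : Set (Set (Event T X))) :
    (Event T X ⊕ Set (Event T X)) → (Event T X ⊕ Set (Event T X)) → Prop
  | base {e f : Event T X} : Bhb w 𝔹 e f → Sat w 𝔹 (Sum.inl e) (Sum.inl f)
  | toBlk {e f : Event T X} {B B' : Set (Event T X)} :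
      e.1.var = f.1.var → B ∈ 𝔹 → B' ∈ 𝔹 → e ∈ B → f ∈ B' → B ≠ B' →
      Sat w 𝔹 (Sum.inl e) (Sum.inl f) → Sat w 𝔹 (Sum.inr B) (Sum.inr B')
  | ofBlk {B B' : Set (Event T X)} {e f : Event T X} :
      Sat w 𝔹 (Sum.inr B) (Sum.inr B') → e ∈ B → f ∈ B' →
      Sat w 𝔹 (Sum.inl e) (Sum.inl f)

/-- The event part of the saturated order `⪻_𝔹`. -/
def SatEv (w : Run T X) (𝔹 : Set (Set (Event T X))) (e f : Event T X) : Prop :=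
  Sat w 𝔹 (Sum.inl e) (Sum.inl f)

def SameVarBlocks (B B' : Set (Event T X)) : Prop :=
  ∃ x : X, (∀ e ∈ B, e.1.var = x) ∧ (∀ e ∈ B', e.1.var = x)

/-- No two distinct blocks of `𝔹` on the same variable overlap in `v`. -/
def NoOverlap (v : Run T X) (𝔹 : Set (Set (Event T X))) : Prop :=
  ∀ B ∈ 𝔹, ∀ B' ∈ 𝔹, B ≠ B' → SameVarBlocks B B' →
    (∀ e ∈ B, ∀ f ∈ B', EvBefore v e f) ∨ (∀ e ∈ B, ∀ f ∈ B', EvBefore v f e)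

/-- `v` is a proper linearization (of the events of `w`) of the order `ord`. -/
def ProperLin (w : Run T X) (𝔹 : Set (Set (Event T X)))
    (ord : Event T X → Event T X → Prop) (v : Run T X) : Prop :=
  w.Perm v ∧ (∀ e f, ord e f → EvBefore v e f) ∧ NoOverlap v 𝔹


/-- `e` is causally ordered before `f` under reads-from equivalence:
`e` occurs before `f` in every reads-from equivalent run. -/
def CausOrd (w : Run T X) (e f : Event T X) : Prop :=
  ∀ w', RfEquiv w w' → EvBefore w' e f

/-- `e` and `f` are causally concurrent under reads-from equivalence. -/
def CausConc (w : Run T X) (e f : Event T X) : Prop :=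
  ¬ CausOrd w e f ∧ ¬ CausOrd w f e

/-! In the run `(w₁ r₁)ⁿ (w₂ r₂)ⁿ` on a single variable any two adjacent letters conflict (same
variable, at least one write), so neither a Mazurkiewicz swap nor a single-event swap of `≡_B` ever
applies, and the trace class is a singleton. A block swap, on the other hand, can only exchange two
adjacent `w r` pairs, because a valid block is never directly followed by a read of its variable
and a write always starts a pair. Hence the `≡_B`-class consists of the runs obtained by
rearranging the thread sequence `t₁ⁿ t₂ⁿ`, and there are `(2n choose n) ≥ 2ⁿ` of them. -/

omit [DecidableEq T] [DecidableEq X]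

def Conflicting (a b : Lbl T X) : Prop :=
  a.var = b.var ∧ (a.op = Op.wr ∨ b.op = Op.wr)

lemma Conflicting.dep {a b : Lbl T X} (h : Conflicting a b) : Dep a b := Or.inr h

lemma Dep.symm {a b : Lbl T X} (h : Dep a b) : Dep b a :=
  h.imp Eq.symm fun ⟨hv, ho⟩ => ⟨hv.symm, ho.symm⟩

lemma MazSwap.symm {v w : Run T X} (h : MazSwap v w) : MazSwap w v := by
  obtain ⟨u, v, a, b, hab⟩ := h
  exact .swap u v b a fun h => hab h.symm

instance : Std.Symm (MazSwap : Run T X → Run T X → Prop) := ⟨fun _ _ => MazSwap.symm⟩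

lemma not_mazSwap_of_isChain_conflicting {w v : Run T X} (hw : w.IsChain Conflicting) :
    ¬ MazSwap w v := by
  rintro ⟨u, v, a, b, hab⟩
  exact hab (List.isChain_append_cons_cons.mp hw).2.1.dep

theorem setOf_mazEquiv_of_isChain_conflicting {u : Run T X} (hu : u.IsChain Conflicting) :
    {v | MazEquiv u v} = {u} := by
  ext v
  simp only [MazEquiv, Relation.EqvGen.eqvGen_eq_reflTransGen, Set.mem_ofPred_eq,
    Set.mem_singleton_iff]
  constructor
  · intro h
    rcases h.cases_head with rfl | ⟨w, hw, -⟩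
    · rfl
    · exact absurd hw (not_mazSwap_of_isChain_conflicting hu)
  · rintro rfl
    exact .refl

lemma ValidBlockSeg.op_eq_wr_of_mem_head? {B s : Run T X} {y : Lbl T X}
    (h : ValidBlockSeg B s) (hy : y ∈ s.head?) (hvar : ∀ b ∈ B, b.var = y.var) :
    y.op = Op.wr := by
  obtain ⟨a, rest, rfl, -, -, hs⟩ := h
  obtain ⟨s, rfl⟩ := List.head?_eq_some_iff.mp hy
  cases hop : y.op
  · obtain ⟨m, hm, -⟩ := hs ⟨0, by simp⟩ hop (hvar a (by simp)).symm
    exact absurd hm (Nat.not_lt_zero _)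
  · rfl

lemma validBlockSeg_of_forall_mem_head? {a : Lbl T X} {rest s : Run T X} (ha : a.op = Op.wr)
    (hrest : ∀ b ∈ rest, b.op = Op.rd ∧ b.var = a.var)
    (hs : ∀ y ∈ s.head?, y.op = Op.wr ∧ y.var = a.var) :
    ValidBlockSeg (a :: rest) s := by
  refine ⟨a, rest, rfl, ha, hrest, fun j hj _ => ?_⟩
  obtain ⟨y, s, rfl⟩ := List.exists_cons_of_length_pos (Nat.zero_lt_of_lt j.isLt)
  have hy := hs y rfl
  -- the first letter of `s` is a write, so the read `j` comes later and `0` is the witness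
  refine ⟨⟨0, by simp⟩, Nat.pos_of_ne_zero fun hj0 => ?_, hy⟩
  obtain ⟨j, _⟩ := j
  subst hj0
  simp [hy.1] at hj

lemma BlkSwap.append_left {v w : Run T X} (q : Run T X) (h : BlkSwap v w) :
    BlkSwap (q ++ v) (q ++ w) := by
  cases h with
  | block p B B' s hB hB' hd => simpa using BlkSwap.block (q ++ p) B B' s hB hB' hd
  | single p s a b ht h => simpa using BlkSwap.single (q ++ p) s a b ht h

lemma BlkEquiv.append_left {v w : Run T X} (q : Run T X) (h : BlkEquiv v w) :
    BlkEquiv (q ++ v) (q ++ w) :=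
  h.lift (q ++ ·) fun _ _ => BlkSwap.append_left q

def wrRd (t : T) (x : X) : Run T X := [⟨t, Op.wr, x⟩, ⟨t, Op.rd, x⟩]

def blockRun (x : X) (ts : List T) : Run T X := (ts.map (wrRd · x)).flatten

section blockRun

variable (x : X)

@[simp]
lemma blockRun_nil : blockRun x ([] : List T) = [] := rfl

@[simp]
lemma blockRun_cons (t : T) (ts : List T) :
    blockRun x (t :: ts) = wrRd t x ++ blockRun x ts := rfl

@[simp]
lemma blockRun_append (ts ts' : List T) :
    blockRun x (ts ++ ts') = blockRun x ts ++ blockRun x ts' := by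
  simp [blockRun]

lemma blockRun_injective : Function.Injective (blockRun (T := T) x) := by
  intro ts ts' h
  induction ts generalizing ts' with
  | nil => cases ts' <;> simp_all [wrRd]
  | cons t ts ih =>
    cases ts' with
    | nil => simp [wrRd] at h
    | cons t' ts' =>
      simp only [blockRun_cons, wrRd, List.cons_append, List.nil_append, List.cons.injEq,
        Lbl.mk.injEq] at h
      obtain ⟨⟨rfl, -⟩, -, h⟩ := h
      rw [ih h]

variable {x}

lemma var_of_mem_blockRun {ts : List T} {a : Lbl T X} (h : a ∈ blockRun x ts) : a.var = x := by
  simp only [blockRun, List.mem_flatten, List.mem_map] at h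
  obtain ⟨_, ⟨t, -, rfl⟩, ha⟩ := h
  simp only [wrRd, List.mem_cons, List.not_mem_nil, or_false] at ha
  rcases ha with rfl | rfl <;> rfl

lemma op_eq_wr_of_mem_head?_blockRun {ts : List T} {a : Lbl T X}
    (h : a ∈ (blockRun x ts).head?) : a.op = Op.wr ∧ a.var = x := by
  cases ts with
  | nil => simp at h
  | cons t ts => simp only [blockRun_cons, wrRd] at h; cases h; exact ⟨rfl, rfl⟩

variable (x) in
lemma isChain_conflicting_blockRun (ts : List T) : (blockRun x ts).IsChain Conflicting := by
  induction ts with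
  | nil => exact .nil
  | cons t ts ih =>
    refine List.IsChain.cons_cons ⟨rfl, .inl rfl⟩ (List.isChain_cons.mpr ⟨fun y hy => ?_, ih⟩)
    obtain ⟨hwr, hvar⟩ := op_eq_wr_of_mem_head?_blockRun hy
    exact ⟨hvar.symm, .inr hwr⟩

lemma exists_eq_append_of_blockRun_eq_append_cons {ts : List T} {p q : Run T X} {a : Lbl T X}
    (h : blockRun x ts = p ++ a :: q) (ha : a.op = Op.wr) :
    ∃ ts₁ ts₂, ts = ts₁ ++ ts₂ ∧ p = blockRun x ts₁ ∧ a :: q = blockRun x ts₂ := by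
  induction ts generalizing p with
  | nil => simp at h
  | cons t ts ih =>
    match p, h with
    | [], h => exact ⟨[], t :: ts, rfl, rfl, h.symm⟩
    | [_], h =>
      simp only [blockRun_cons, wrRd, List.cons_append, List.nil_append, List.cons.injEq] at h
      obtain ⟨-, rfl, -⟩ := h
      cases ha
    | _ :: _ :: p, h =>
      simp only [blockRun_cons, wrRd, List.cons_append, List.nil_append, List.cons.injEq] at h
      obtain ⟨rfl, rfl, hp⟩ := h
      obtain ⟨ts₁, ts₂, rfl, rfl, hq⟩ := ih hp
      exact ⟨t :: ts₁, ts₂, rfl, rfl, hq⟩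

lemma exists_eq_cons_of_blockRun_eq_append {ts : List T} {a : Lbl T X} {rest s : Run T X}
    (h : blockRun x ts = a :: rest ++ s) (hrest : ∀ b ∈ rest, b.op = Op.rd)
    (hs : ∀ y ∈ s.head?, y.op = Op.wr) :
    ∃ t ts', ts = t :: ts' ∧ a :: rest = wrRd t x ∧ s = blockRun x ts' := by
  match ts, rest, h with
  | [], _, h => simp at h
  | _ :: _, [], h =>
    simp only [blockRun_cons, wrRd, List.cons_append, List.nil_append, List.cons.injEq] at h
    obtain ⟨-, rfl⟩ := h
    cases hs _ rfl
  | t :: ts, [_], h =>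
    simp only [blockRun_cons, wrRd, List.cons_append, List.nil_append, List.cons.injEq] at h
    obtain ⟨rfl, rfl, h⟩ := h
    exact ⟨t, ts, rfl, rfl, h.symm⟩
  | t :: ts, _ :: b :: _, h =>
    simp only [blockRun_cons, wrRd, List.cons_append, List.nil_append, List.cons.injEq] at h
    obtain ⟨rfl, rfl, h⟩ := h
    have hb := hrest b (by simp)
    rw [(op_eq_wr_of_mem_head?_blockRun (h ▸ rfl : b ∈ (blockRun x ts).head?)).1] at hb
    cases hb

end blockRun

lemma validBlockSeg_wrRd_blockRun (t : T) (x : X) (ts : List T) :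
    ValidBlockSeg (wrRd t x) (blockRun x ts) :=
  validBlockSeg_of_forall_mem_head? rfl (by simp) fun _ hy =>
    op_eq_wr_of_mem_head?_blockRun hy

lemma blkSwap_blockRun_swap {t t' : T} (h : t ≠ t') (x : X) (ts : List T) :
    BlkSwap (blockRun x (t :: t' :: ts)) (blockRun x (t' :: t :: ts)) := by
  have hd : ThreadsDisjoint (wrRd t x) (wrRd t' x) := by simp [ThreadsDisjoint, wrRd, h]
  simpa using BlkSwap.block [] (wrRd t x) (wrRd t' x) (blockRun x ts)
    (validBlockSeg_wrRd_blockRun t x (t' :: ts))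
    (validBlockSeg_wrRd_blockRun t' x ts) hd

lemma blkEquiv_blockRun_of_perm (x : X) {ts ts' : List T} (h : ts.Perm ts') :
    BlkEquiv (blockRun x ts) (blockRun x ts') := by
  induction h with
  | nil => exact .refl
  | cons t _ ih => exact ih.append_left (wrRd t x)
  | swap t' t ts =>
    by_cases htt : t = t'
    · subst htt
      exact .refl
    · exact .single (blkSwap_blockRun_swap htt x ts)
  | trans _ _ ih ih' => exact ih.trans ih'

lemma BlkSwap.exists_perm_of_blockRun {x : X} {ts : List T} {w : Run T X}
    (h : BlkSwap (blockRun x ts) w) : ∃ ts', ts'.Perm ts ∧ w = blockRun x ts' := by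
  generalize hv : blockRun x ts = v at h
  cases h with
  | single p s a b _ hab =>
    have hc := (List.isChain_append_cons_cons.mp (hv ▸ isChain_conflicting_blockRun x ts)).2.1
    rcases hab with hne | ⟨ha, hb⟩
    · exact absurd hc.1 hne
    · rcases hc.2 with h | h <;> simp [h] at ha hb
  | block p B B' s hB hB' _ =>
    have hs : ∀ y ∈ s.head?, y.op = Op.wr := fun y hy =>
      hB'.op_eq_wr_of_mem_head? hy fun b hb => by
        rw [var_of_mem_blockRun (hv ▸ by simp [hb] : b ∈ blockRun x ts),
          var_of_mem_blockRun (hv ▸ by simp [List.mem_of_mem_head? hy] : y ∈ blockRun x ts)]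
    obtain ⟨a, rest, rfl, ha, hrest, -⟩ := hB
    obtain ⟨a', rest', rfl, ha', hrest', -⟩ := hB'
    obtain ⟨ts₁, ts₂, rfl, rfl, h₂⟩ := exists_eq_append_of_blockRun_eq_append_cons
      (by rw [hv]; simp : blockRun x ts = p ++ a :: (rest ++ a' :: rest' ++ s)) ha
    obtain ⟨t, ts₃, rfl, hB, h₃⟩ := exists_eq_cons_of_blockRun_eq_append
      (by rw [← h₂]; simp : blockRun x ts₂ = a :: rest ++ (a' :: rest' ++ s))
      (fun b hb => (hrest b hb).1) (by simpa using ha')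
    obtain ⟨t', ts₄, rfl, hB', rfl⟩ := exists_eq_cons_of_blockRun_eq_append h₃.symm
      (fun b hb => (hrest' b hb).1) hs
    refine ⟨ts₁ ++ t' :: t :: ts₄, .append_left _ (.swap _ _ _), ?_⟩
    simp [hB, hB']

theorem setOf_blkEquiv_blockRun (x : X) (ts : List T) :
    {v | BlkEquiv (blockRun x ts) v} = blockRun x '' {ts' | ts'.Perm ts} := by
  ext v
  constructor
  · intro h
    induction h with
    | refl => exact ⟨ts, .refl _, rfl⟩
    | tail _ hs ih =>
      obtain ⟨ts', hp, rfl⟩ := ih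
      obtain ⟨ts'', hp', rfl⟩ := hs.exists_perm_of_blockRun
      exact ⟨ts'', hp'.trans hp, rfl⟩
  · rintro ⟨ts', hp, rfl⟩
    exact blkEquiv_blockRun_of_perm x hp.symm

theorem _root_.List.setOf_perm_replicate_succ_append_replicate_succ {α : Type*} (a b : α)
    (m k : ℕ) :
    {l : List α | l.Perm (.replicate (m + 1) a ++ .replicate (k + 1) b)} =
      List.cons a '' {l : List α | l.Perm (.replicate m a ++ .replicate (k + 1) b)} ∪
      List.cons b '' {l : List α | l.Perm (.replicate (m + 1) a ++ .replicate k b)} := by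
  have hb : (List.replicate (m + 1) a ++ .replicate (k + 1) b).Perm
      (b :: (.replicate (m + 1) a ++ .replicate k b)) :=
    List.perm_middle
  ext l
  simp only [Set.mem_union, Set.mem_image, Set.mem_ofPred_eq]
  constructor
  · intro h
    cases l with
    | nil => simpa using h.length_eq
    | cons y l =>
      have hy : y = a ∨ y = b := by simpa using h.subset List.mem_cons_self
      rcases hy with rfl | rfl
      · exact .inl ⟨l, (List.perm_cons y).mp h, rfl⟩
      · exact .inr ⟨l, (List.perm_cons y).mp (h.trans hb), rfl⟩
  · rintro (⟨l, h, rfl⟩ | ⟨l, h, rfl⟩)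
    · exact (List.perm_cons a).mpr h
    · exact ((List.perm_cons b).mpr h).trans hb.symm

theorem _root_.List.ncard_setOf_perm_replicate_append_replicate {α : Type*} {a b : α}
    (hab : a ≠ b) (m k : ℕ) :
    {l : List α | l.Perm (.replicate m a ++ .replicate k b)}.ncard = (m + k).choose m := by
  have hfin (l : List α) : {l' : List α | l'.Perm l}.Finite :=
    l.permutations.finite_toSet.subset fun _ => List.mem_permutations.mpr
  induction m generalizing k with
  | zero => simp [List.perm_replicate]
  | succ m ihm =>
    induction k with
    | zero => simp [List.perm_replicate]
    | succ k ihk =>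
      have hdisj :
          Disjoint (List.cons a '' {l : List α | l.Perm (.replicate m a ++ .replicate (k + 1) b)})
            (List.cons b '' {l : List α | l.Perm (.replicate (m + 1) a ++ .replicate k b)}) :=
        Set.disjoint_left.mpr fun _ ⟨_, _, h⟩ ⟨_, _, h'⟩ => hab (List.cons.inj (h.trans h'.symm)).1
      rw [List.setOf_perm_replicate_succ_append_replicate_succ,
        Set.ncard_union_eq hdisj ((hfin _).image _) ((hfin _).image _),
        Set.ncard_image_of_injective _ List.cons_injective,
        Set.ncard_image_of_injective _ List.cons_injective, ihm, ihk,
        show m + 1 + (k + 1) = m + (k + 1) + 1 by omega, show m + 1 + k = m + (k + 1) by omega,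
        Nat.choose_succ_succ']

theorem _root_.Nat.two_pow_le_centralBinom (n : ℕ) : 2 ^ n ≤ n.centralBinom := by
  induction n with
  | zero => simp
  | succ n ih =>
    have h : (n + 1) * (2 * n.centralBinom) ≤ (n + 1) * (n + 1).centralBinom := by
      rw [Nat.succ_mul_centralBinom_succ]
      nlinarith
    calc 2 ^ (n + 1) = 2 * 2 ^ n := by ring
      _ ≤ 2 * n.centralBinom := by omega
      _ ≤ (n + 1).centralBinom := Nat.le_of_mul_le_mul_left h n.succ_pos

theorem block_class_exponentially_larger_general
    (T X : Type) (t1 t2 : T) (ht : t1 ≠ t2) (x : X) (n : ℕ) :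
    ∃ u : Run T X,
      u = (List.replicate n ([⟨t1, Op.wr, x⟩, ⟨t1, Op.rd, x⟩] : Run T X)).flatten ++
          (List.replicate n ([⟨t2, Op.wr, x⟩, ⟨t2, Op.rd, x⟩] : Run T X)).flatten ∧
      {v | MazEquiv u v} = {u} ∧
      Set.ncard {v | BlkEquiv u v} =
        (2 * n).factorial / (n.factorial * n.factorial) ∧
      2 ^ n ≤ Set.ncard {v | BlkEquiv u v} := by
  have hu : (List.replicate n ([⟨t1, Op.wr, x⟩, ⟨t1, Op.rd, x⟩] : Run T X)).flatten ++
      (List.replicate n ([⟨t2, Op.wr, x⟩, ⟨t2, Op.rd, x⟩] : Run T X)).flatten =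
        blockRun x (.replicate n t1 ++ .replicate n t2) := by
    simp [blockRun, wrRd, List.map_replicate]
  have hcard : {v | BlkEquiv (blockRun x (.replicate n t1 ++ .replicate n t2)) v}.ncard =
      n.centralBinom := by
    rw [setOf_blkEquiv_blockRun, Set.ncard_image_of_injective _ (blockRun_injective x),
      List.ncard_setOf_perm_replicate_append_replicate ht, Nat.centralBinom_eq_two_mul_choose,
      two_mul]
  refine ⟨_, rfl, ?_, ?_, ?_⟩ <;> rw [hu]
  · exact setOf_mazEquiv_of_isChain_conflicting (isChain_conflicting_blockRun x _)
  · rw [hcard, Nat.centralBinom_eq_two_mul_choose,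
      Nat.choose_eq_factorial_div_factorial (by omega), show 2 * n - n = n by omega]
  · exact hcard ▸ Nat.two_pow_le_centralBinom n

/-- for every `n ≥ 1`, the run consisting of `n` blocks
`w(x)·r(x)` of thread `t1` followed by `n` such blocks of thread `t2` has a
singleton `≡_M`-class, while its `≡_B`-class has `(2n)!/(n!·n!)` elements;
in particular the `≡_B`-class is exponentially larger. -/
theorem block_class_exponentially_larger
    (T X : Type) [DecidableEq T] [DecidableEq X]
    (t1 t2 : T) (ht : t1 ≠ t2) (x : X) (n : ℕ) (hn : 1 ≤ n) :
    ∃ u : Run T X,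
      u = (List.replicate n ([⟨t1, Op.wr, x⟩, ⟨t1, Op.rd, x⟩] : Run T X)).flatten ++
          (List.replicate n ([⟨t2, Op.wr, x⟩, ⟨t2, Op.rd, x⟩] : Run T X)).flatten ∧
      {v | MazEquiv u v} = {u} ∧
      Set.ncard {v | BlkEquiv u v} =
        (2 * n).factorial / (n.factorial * n.factorial) ∧
      2 ^ n ≤ Set.ncard {v | BlkEquiv u v} :=
  block_class_exponentially_larger_general T X t1 t2 ht x n

end TraceTheory
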